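/- Let k be a positive integer and Λ a finitely aligned k-graph with boundary-path groupoid G_Λ, endowed with the topology generated by the sets Z(λ *_s μ \ G). Then Λ is cofinal if and only if G_Λ is minimal, i.e. the unit space G_Λ^(0) has no open invariant subsets other than ∅ and G_Λ^(0); equivalently, for each x ∈ G_Λ^(0) the orbit [x] := s(xG_Λ) is dense in G_Λ^(0). -/

import Mathlib

/-- A higher-rank graph (`k`-graph): a countable small category together with a degree
functor `d` into `ℕᵏ` satisfying the unique factorisation property.  The morphisms form the
type `Path`; the objects (vertices) are identified with the identity paths via `vertex`.
Composition `comp p q` is only meaningful when `src p = rng q`; all axioms are stated under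
this compatibility assumption. -/
structure KGraph (k : ℕ) where
  Obj : Type
  Path : Type
  countable_obj : Countable Obj
  countable_path : Countable Path
  src : Path → Obj
  rng : Path → Obj
  vertex : Obj → Path
  comp : Path → Path → Path
  deg : Path → Fin k → ℕ
  src_vertex : ∀ v, src (vertex v) = v
  rng_vertex : ∀ v, rng (vertex v) = v
  deg_vertex : ∀ v, deg (vertex v) = 0
  vertex_comp : ∀ p, comp (vertex (rng p)) p = p
  comp_vertex : ∀ p, comp p (vertex (src p)) = p
  src_comp : ∀ p q, src p = rng q → src (comp p q) = src q
  rng_comp : ∀ p q, src p = rng q → rng (comp p q) = rng p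
  deg_comp : ∀ p q, src p = rng q → deg (comp p q) = deg p + deg q
  comp_assoc : ∀ p q r, src p = rng q → src q = rng r →
    comp (comp p q) r = comp p (comp q r)
  factorisation : ∀ (p : Path) (m n : Fin k → ℕ), deg p = m + n →
    ∃! x : Path × Path, src x.1 = rng x.2 ∧ deg x.1 = m ∧ deg x.2 = n ∧
      comp x.1 x.2 = p

namespace KGraph

variable {k : ℕ} (Λ : KGraph k)

/-- `Λ^min(p,q)`: the pairs `(ρ,τ)` with `pρ = qτ` a minimal common extension of `p` and `q`. -/
def minPairs (p q : Λ.Path) : Set (Λ.Path × Λ.Path) :=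
  {x | Λ.src p = Λ.rng x.1 ∧ Λ.src q = Λ.rng x.2 ∧
    Λ.comp p x.1 = Λ.comp q x.2 ∧
    Λ.deg (Λ.comp p x.1) = Λ.deg p ⊔ Λ.deg q}

/-- `MCE(p,q)`: minimal common extensions of `p` and `q`. -/
def MCE (p q : Λ.Path) : Set Λ.Path :=
  {t | Λ.deg t = Λ.deg p ⊔ Λ.deg q ∧
    (∃ r, Λ.src p = Λ.rng r ∧ Λ.comp p r = t) ∧
    (∃ r, Λ.src q = Λ.rng r ∧ Λ.comp q r = t)}

/-- `Λ` is finitely aligned if all the sets `Λ^min(p,q)` are finite. -/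
def FinitelyAligned : Prop := ∀ p q, (Λ.minPairs p q).Finite

/-- `E ⊆ vΛ` is exhaustive. -/
def Exhaustive (v : Λ.Obj) (E : Set Λ.Path) : Prop :=
  ∀ p, Λ.rng p = v → ∃ q ∈ E, (Λ.minPairs p q).Nonempty

/-- `E` is a finite exhaustive subset of `vΛ \ {v}`, i.e. an element of `FE(Λ)`
with range vertex `v`. -/
def FE (v : Λ.Obj) (E : Set Λ.Path) : Prop :=
  E.Finite ∧ (∀ p ∈ E, Λ.rng p = v ∧ p ≠ Λ.vertex v) ∧ Λ.Exhaustive v E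

/-- `Ext(p; E)`. -/
def extSet (p : Λ.Path) (E : Set Λ.Path) : Set Λ.Path :=
  ⋃ q ∈ E, {r | ∃ t, (r, t) ∈ Λ.minPairs p q}

section Family

variable {A : Type} [NonUnitalRing A]

/-- (KP1): the vertex elements are mutually orthogonal idempotents. -/
def KP1 (S : Λ.Path → A) : Prop :=
  (∀ v, S (Λ.vertex v) * S (Λ.vertex v) = S (Λ.vertex v)) ∧
  ∀ v w, v ≠ w → S (Λ.vertex v) * S (Λ.vertex w) = 0

/-- (KP2): multiplicativity on composable paths and ghost paths.  Here `T μ` plays the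
role of `S_{μ*}`. -/
def KP2 (S T : Λ.Path → A) : Prop :=
  ∀ p q, Λ.src p = Λ.rng q →
    S p * S q = S (Λ.comp p q) ∧ T q * T p = T (Λ.comp p q)

/-- (KP3): `S_{p*} S_q = ∑_{(ρ,τ) ∈ Λ^min(p,q)} S_ρ S_{τ*}` (empty sum read as `0`). -/
def KP3 (S T : Λ.Path → A) : Prop :=
  ∀ p q, T p * S q = ∑ᶠ x ∈ Λ.minPairs p q, S x.1 * T x.2

/-- (KP4): `∏_{p ∈ E} (S_v - S_p S_{p*}) = 0` for every finite exhaustive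
`E ⊆ vΛ \ {v}`.  The product is implemented as a fold over any duplicate-free list
enumerating `E`, with the harmless extra idempotent factor `S_v` in front. -/
def KP4 (S T : Λ.Path → A) : Prop :=
  ∀ (v : Λ.Obj) (l : List Λ.Path), l.Nodup → Λ.FE v {p | p ∈ l} →
    (l.map fun p => S (Λ.vertex v) - S p * T p).foldl (· * ·) (S (Λ.vertex v)) = 0

/-- A Kumjian–Pask `Λ`-family in a (not necessarily unital) ring: `S p` represents `s_p`
and `T p` represents the ghost element `s_{p*}`, with `T` and `S` agreeing on vertices. -/
def IsKPFamily (S T : Λ.Path → A) : Prop :=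
  (∀ v, T (Λ.vertex v) = S (Λ.vertex v)) ∧
  Λ.KP1 S ∧ Λ.KP2 S T ∧ Λ.KP3 S T ∧ Λ.KP4 S T

end Family

/-- `(B, s, t)` is *the* (universal) Kumjian–Pask algebra of `Λ` over `R`:
`(s, t)` is a Kumjian–Pask `Λ`-family generating `B`, and every Kumjian–Pask `Λ`-family
in an `R`-algebra `A` factors uniquely through it. -/
def IsUniversalKP (R : Type) [CommRing R] (B : Type) [NonUnitalRing B]
    [Module R B] [SMulCommClass R B B] [IsScalarTower R B B]
    (s t : Λ.Path → B) : Prop :=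
  Λ.IsKPFamily s t ∧
  NonUnitalAlgebra.adjoin R (Set.range s ∪ Set.range t) = ⊤ ∧
  ∀ (A : Type) [NonUnitalRing A] [Module R A] [SMulCommClass R A A]
    [IsScalarTower R A A] (S T : Λ.Path → A), Λ.IsKPFamily S T →
      ∃! π : B →ₙₐ[R] A, (∀ p, π (s p) = S p) ∧ (∀ p, π (t p) = T p)

/-- A boundary path of `Λ`: a degree-preserving functor `x : Ω_{k,m} → Λ`
(for `m = deg x ∈ (ℕ∪{∞})ᵏ`), recorded via its segments `seg p q = x(p,q)`
for `p ≤ q ≤ m` (the value of `seg` outside this domain is junk), and satisfying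
the boundary-path condition with respect to finite exhaustive sets. -/
structure BoundaryPath (Λ : KGraph k) where
  deg : Fin k → ℕ∞
  seg : (Fin k → ℕ) → (Fin k → ℕ) → Λ.Path
  deg_seg : ∀ p q, p ≤ q → (∀ i, (q i : ℕ∞) ≤ deg i) → Λ.deg (seg p q) = q - p
  seg_self : ∀ p, (∀ i, (p i : ℕ∞) ≤ deg i) →
    seg p p = Λ.vertex (Λ.src (seg p p))
  src_seg : ∀ p q r, p ≤ q → q ≤ r → (∀ i, (r i : ℕ∞) ≤ deg i) →
    Λ.src (seg p q) = Λ.rng (seg q r)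
  comp_seg : ∀ p q r, p ≤ q → q ≤ r → (∀ i, (r i : ℕ∞) ≤ deg i) →
    Λ.comp (seg p q) (seg q r) = seg p r
  boundary : ∀ n : Fin k → ℕ, (∀ i, (n i : ℕ∞) ≤ deg i) →
    ∀ E : Set Λ.Path, Λ.FE (Λ.src (seg n n)) E →
      ∃ p ∈ E, (∀ i, ((n + Λ.deg p) i : ℕ∞) ≤ deg i) ∧ seg n (n + Λ.deg p) = p

namespace BoundaryPath

variable {Λ : KGraph k}

/-- The vertex `x(n)` of a boundary path. -/
def vtx (x : Λ.BoundaryPath) (n : Fin k → ℕ) : Λ.Obj := Λ.src (x.seg n n)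

/-- The range `r(x) = x(0)` of a boundary path. -/
def rng (x : Λ.BoundaryPath) : Λ.Obj := x.vtx 0

end BoundaryPath

/-- `IsShift n x y` says that `y = σⁿ x` is the shift of the boundary path `x` by
`n ≤ d(x)`. -/
def IsShift (n : Fin k → ℕ) (x y : Λ.BoundaryPath) : Prop :=
  (∀ i, (n i : ℕ∞) ≤ x.deg i) ∧
  (∀ i, y.deg i = x.deg i - (n i : ℕ∞)) ∧
  ∀ p q, p ≤ q → (∀ i, (q i : ℕ∞) ≤ y.deg i) → y.seg p q = x.seg (n + p) (n + q)

/-- `IsConcat p x y` says that `y = p·x` is the concatenation of the path `p` with the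
boundary path `x` (so `y(0, d p) = p` and `σ^{d p} y = x`). -/
def IsConcat (p : Λ.Path) (x y : Λ.BoundaryPath) : Prop :=
  Λ.IsShift (Λ.deg p) y x ∧ y.seg 0 (Λ.deg p) = p

/-- A boundary path `x` is aperiodic if distinct paths with source `r(x)` give distinct
concatenations `p·x ≠ q·x`. -/
def AperiodicBP (x : Λ.BoundaryPath) : Prop :=
  ∀ p q, Λ.src p = x.rng → Λ.src q = x.rng → p ≠ q →
    ∀ y, Λ.IsConcat p x y → ¬Λ.IsConcat q x y

/-- `Λ` is aperiodic: every vertex receives an aperiodic boundary path. -/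
def Aperiodic : Prop :=
  ∀ v : Λ.Obj, ∃ x : Λ.BoundaryPath, x.rng = v ∧ Λ.AperiodicBP x

/-- `Λ` is cofinal: for every vertex `v` and boundary path `x` there is `n ≤ d(x)`
with `vΛx(n) ≠ ∅`. -/
def Cofinal : Prop :=
  ∀ (v : Λ.Obj) (x : Λ.BoundaryPath), ∃ n : Fin k → ℕ,
    (∀ i, (n i : ℕ∞) ≤ x.deg i) ∧ ∃ p, Λ.rng p = v ∧ Λ.src p = x.vtx n

/-- The boundary-path groupoid `G_Λ` as a set of triples `(x, m, y)` with
`σᵖ x = σ^q y` and `m = p - q`. -/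
def BPG : Set (Λ.BoundaryPath × (Fin k → ℤ) × Λ.BoundaryPath) :=
  {a | ∃ (p q : Fin k → ℕ) (z : Λ.BoundaryPath),
    (fun i => (p i : ℤ) - (q i : ℤ)) = a.2.1 ∧
    Λ.IsShift p a.1 z ∧ Λ.IsShift q a.2.2 z}

/-- `Z(p) = p ∂Λ`, the cylinder set of boundary paths with prefix `p`. -/
def ZC (p : Λ.Path) : Set Λ.BoundaryPath := {x | ∃ z, Λ.IsConcat p z x}

/-- `Z(p *ₛ q)`. -/
def ZP (p q : Λ.Path) : Set (Λ.BoundaryPath × (Fin k → ℤ) × Λ.BoundaryPath) :=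
  {a | a.2.1 = (fun i => (Λ.deg p i : ℤ) - (Λ.deg q i : ℤ)) ∧
    a.1 ∈ Λ.ZC p ∧ a.2.2 ∈ Λ.ZC q ∧
    ∃ z, Λ.IsShift (Λ.deg p) a.1 z ∧ Λ.IsShift (Λ.deg q) a.2.2 z}

/-- `Z(p *ₛ q \ G)`. -/
def ZPD (p q : Λ.Path) (G : Set Λ.Path) :
    Set (Λ.BoundaryPath × (Fin k → ℤ) × Λ.BoundaryPath) :=
  Λ.ZP p q \ ⋃ ν ∈ G, Λ.ZP (Λ.comp p ν) (Λ.comp q ν)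

/-- The boundary-path groupoid `G_Λ` as a type. -/
abbrev bpSpace : Type := {a // a ∈ Λ.BPG}

/-- The topology on `G_Λ` generated by the basic sets `Z(p *ₛ q \ G)` with `G` finite. -/
def bpTop : TopologicalSpace Λ.bpSpace :=
  TopologicalSpace.generateFrom
    {V | ∃ (p q : Λ.Path) (G : Set Λ.Path), Λ.src p = Λ.src q ∧
      (∀ ν ∈ G, Λ.rng ν = Λ.src p) ∧ G.Finite ∧
      V = Subtype.val ⁻¹' Λ.ZPD p q G}

theorem isShift_zero (x : Λ.BoundaryPath) : Λ.IsShift 0 x x :=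
  ⟨fun i => by simp, fun i => by simp, fun p q _ _ => by simp⟩

/-- The unit space `G_Λ^{(0)}` of the boundary-path groupoid. -/
def unitSet : Set Λ.bpSpace := {a | a.1.2.1 = 0 ∧ a.1.1 = a.1.2.2}

/-- The unit `(x, 0, x)` of `G_Λ` corresponding to a boundary path `x`. -/
def unitOf (x : Λ.BoundaryPath) : Λ.bpSpace :=
  ⟨(x, 0, x), ⟨0, 0, x, by funext i; simp, Λ.isShift_zero x, Λ.isShift_zero x⟩⟩

end KGraph

/-!
Cofinal ⇒ minimal. If the unit of `w` lies in a relatively open invariant set `V`, then `w` has a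
basic neighbourhood `Z(P) \ ⋃_{μ ∈ F} Z(μ)` with `F` finite. If no `Z(Pτ)` avoided all `Z(μ)`, the
finite set `Ext(P; F)` would be exhaustive at `s(P)` (this is where finite alignment enters), and
`w` would pass through one of its elements at `d(P)`, i.e. lie in some `Z(μ)`. So `V` contains a
whole cylinder `Z(ξ)`. For any boundary path `y`, cofinality gives `p ∈ s(ξ)Λy(n)`; then
`ξ p σⁿ y` lies in `Z(ξ)` and in the orbit of `y`, and invariance puts `y` into `V`.

Minimal ⇒ cofinal. For a vertex `v`, the units `x` with `vΛx(n) ≠ ∅` for some `n` form an open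
invariant set, which is nonempty since every vertex receives a boundary path.

Shifts `σⁿx`, concatenations `λx` and a boundary path at a given vertex are all built as limits of
compatible families of finite paths. For `λx` the boundary condition at `n` is reduced to the one
at `n ∨ d(λ)` via `Ext(λx(n, n ∨ d(λ)); E)`; a boundary path at `v` is the union of a chain of
paths in which every pair (position, finite set) is treated infinitely often.
-/

namespace KGraph

variable {k : ℕ} {Λ : KGraph k}

theorem eq_of_comp_eq_comp {a b a' b' : Λ.Path} (hab : Λ.src a = Λ.rng b)
    (hab' : Λ.src a' = Λ.rng b') (hdeg : Λ.deg a = Λ.deg a') (h : Λ.comp a b = Λ.comp a' b') :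
    a = a' ∧ b = b' := by
  have hdeg' : Λ.deg b = Λ.deg b' := by
    have := Λ.deg_comp a' b' hab'
    rwa [← h, Λ.deg_comp a b hab, hdeg, add_right_inj] at this
  obtain ⟨_, -, huniq⟩ := Λ.factorisation (Λ.comp a b) (Λ.deg a) (Λ.deg b) (Λ.deg_comp a b hab)
  have h₁ := huniq (a, b) ⟨hab, rfl, rfl, rfl⟩
  have h₂ := huniq (a', b') ⟨hab', hdeg.symm, hdeg'.symm, h.symm⟩
  exact Prod.ext_iff.mp (h₁.trans h₂.symm)

theorem eq_vertex_of_deg_eq_zero {t : Λ.Path} (h : Λ.deg t = 0) : t = Λ.vertex (Λ.src t) := by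
  have hv : Λ.comp t (Λ.vertex (Λ.src t)) = Λ.comp (Λ.vertex (Λ.rng t)) t := by
    rw [Λ.comp_vertex, Λ.vertex_comp]
  refine (eq_of_comp_eq_comp (Λ.rng_vertex _).symm ?_ ?_ hv).2.symm
  · rw [Λ.src_vertex]
  · rw [h, Λ.deg_vertex]

open Classical in
/-- `Λ.split t n = (t(0,n), t(n,d t))`; junk `(t, t)` unless `n ≤ d t`. -/
noncomputable def split (Λ : KGraph k) (t : Λ.Path) (n : Fin k → ℕ) : Λ.Path × Λ.Path :=
  if h : n ≤ Λ.deg t then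
    (Λ.factorisation t n (Λ.deg t - n) (add_tsub_cancel_of_le h).symm).exists.choose
  else (t, t)

theorem split_spec {t : Λ.Path} {n : Fin k → ℕ} (h : n ≤ Λ.deg t) :
    Λ.src (Λ.split t n).1 = Λ.rng (Λ.split t n).2 ∧ Λ.deg (Λ.split t n).1 = n ∧
      Λ.comp (Λ.split t n).1 (Λ.split t n).2 = t := by
  rw [split, dif_pos h]
  obtain ⟨h₁, h₂, -, h₄⟩ :=
    (Λ.factorisation t n (Λ.deg t - n) (add_tsub_cancel_of_le h).symm).exists.choose_spec
  exact ⟨h₁, h₂, h₄⟩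

theorem split_comp {a b : Λ.Path} (hab : Λ.src a = Λ.rng b) :
    Λ.split (Λ.comp a b) (Λ.deg a) = (a, b) := by
  have hle : Λ.deg a ≤ Λ.deg (Λ.comp a b) := by rw [Λ.deg_comp a b hab]; exact le_self_add
  obtain ⟨h₁, h₂, h₃⟩ := split_spec hle
  obtain ⟨e₁, e₂⟩ := eq_of_comp_eq_comp h₁ hab h₂ h₃
  exact Prod.ext e₁ e₂

/-- The segment `t(p,q)`. -/
noncomputable def segment (Λ : KGraph k) (t : Λ.Path) (p q : Fin k → ℕ) : Λ.Path :=
  (Λ.split (Λ.split t q).1 p).2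

theorem segment_comp_comp {a b c : Λ.Path} (hab : Λ.src a = Λ.rng b) (hbc : Λ.src b = Λ.rng c) :
    Λ.segment (Λ.comp (Λ.comp a b) c) (Λ.deg a) (Λ.deg a + Λ.deg b) = b := by
  have habc : Λ.src (Λ.comp a b) = Λ.rng c := by rw [Λ.src_comp a b hab, hbc]
  rw [segment, ← Λ.deg_comp a b hab, split_comp habc, split_comp hab]

theorem exists_comp_eq {t : Λ.Path} {n : Fin k → ℕ} (h : n ≤ Λ.deg t) :
    ∃ a b, Λ.src a = Λ.rng b ∧ Λ.deg a = n ∧ Λ.comp a b = t :=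
  ⟨_, _, split_spec h⟩

theorem exists_comp_comp_eq {t : Λ.Path} {p q : Fin k → ℕ} (hpq : p ≤ q) (hq : q ≤ Λ.deg t) :
    ∃ a b c, Λ.src a = Λ.rng b ∧ Λ.src b = Λ.rng c ∧ Λ.deg a = p ∧ Λ.deg a + Λ.deg b = q ∧
      Λ.comp (Λ.comp a b) c = t := by
  obtain ⟨ab, c, habc, rfl, rfl⟩ := exists_comp_eq hq
  obtain ⟨a, b, hab, rfl, rfl⟩ := exists_comp_eq hpq
  refine ⟨a, b, c, hab, ?_, rfl, (Λ.deg_comp a b hab).symm, rfl⟩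
  rwa [← Λ.src_comp a b hab]

section Segment

variable {t a b : Λ.Path} {p q r : Fin k → ℕ}

theorem deg_segment (hpq : p ≤ q) (hq : q ≤ Λ.deg t) : Λ.deg (Λ.segment t p q) = q - p := by
  obtain ⟨a, b, c, hab, hbc, rfl, rfl, rfl⟩ := exists_comp_comp_eq hpq hq
  rw [segment_comp_comp hab hbc, add_tsub_cancel_left]

theorem deg_segment_zero (hq : q ≤ Λ.deg t) : Λ.deg (Λ.segment t 0 q) = q := by
  rw [deg_segment zero_le hq, tsub_zero]

theorem segment_zero_deg (t : Λ.Path) : Λ.segment t 0 (Λ.deg t) = t := by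
  have := segment_comp_comp (Λ.src_vertex (Λ.rng t)) (Λ.rng_vertex (Λ.src t)).symm
  rwa [Λ.vertex_comp, Λ.comp_vertex, Λ.deg_vertex, zero_add] at this

theorem segment_self (hp : p ≤ Λ.deg t) :
    Λ.segment t p p = Λ.vertex (Λ.src (Λ.segment t p p)) :=
  eq_vertex_of_deg_eq_zero (by rw [deg_segment le_rfl hp, tsub_self])

theorem segment_comp_left (hab : Λ.src a = Λ.rng b) (hpq : p ≤ q) (hq : q ≤ Λ.deg a) :
    Λ.segment (Λ.comp a b) p q = Λ.segment a p q := by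
  obtain ⟨α, β, γ, hαβ, hβγ, rfl, rfl, rfl⟩ := exists_comp_comp_eq hpq hq
  have hαβγ : Λ.src (Λ.comp α β) = Λ.rng γ := by rw [Λ.src_comp _ _ hαβ, hβγ]
  have hγb : Λ.src γ = Λ.rng b := by rwa [← Λ.src_comp _ _ hαβγ]
  rw [Λ.comp_assoc _ _ _ hαβγ hγb, segment_comp_comp hαβ (by rwa [Λ.rng_comp _ _ hγb]),
    segment_comp_comp hαβ hβγ]

theorem segment_comp_right (hab : Λ.src a = Λ.rng b) (hpq : p ≤ q) (hq : q ≤ Λ.deg b) :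
    Λ.segment (Λ.comp a b) (Λ.deg a + p) (Λ.deg a + q) = Λ.segment b p q := by
  obtain ⟨α, β, γ, hαβ, hβγ, rfl, rfl, rfl⟩ := exists_comp_comp_eq hpq hq
  have hαβγ : Λ.src (Λ.comp α β) = Λ.rng γ := by rw [Λ.src_comp _ _ hαβ, hβγ]
  have haα : Λ.src a = Λ.rng α := by rwa [Λ.rng_comp _ _ hαβγ, Λ.rng_comp _ _ hαβ] at hab
  have haαβ : Λ.src (Λ.comp a α) = Λ.rng β := by rw [Λ.src_comp _ _ haα, hαβ]
  rw [← Λ.comp_assoc _ _ _ (by rwa [Λ.rng_comp _ _ hαβ]) hαβγ, ← Λ.comp_assoc _ _ _ haα hαβ,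
    ← add_assoc, ← Λ.deg_comp _ _ haα, segment_comp_comp haαβ hβγ, segment_comp_comp hαβ hβγ]

theorem comp_segment (hpq : p ≤ q) (hqr : q ≤ r) (hr : r ≤ Λ.deg t) :
    Λ.src (Λ.segment t p q) = Λ.rng (Λ.segment t q r) ∧
      Λ.comp (Λ.segment t p q) (Λ.segment t q r) = Λ.segment t p r := by
  obtain ⟨T, c, hTc, rfl, rfl⟩ := exists_comp_eq hr
  obtain ⟨S, γ, hSγ, rfl, rfl⟩ := exists_comp_eq hqr
  obtain ⟨α, β, hαβ, rfl, rfl⟩ := exists_comp_eq hpq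
  have hβγ : Λ.src β = Λ.rng γ := by rwa [Λ.src_comp _ _ hαβ] at hSγ
  have hγc : Λ.src γ = Λ.rng c := by rwa [Λ.src_comp _ _ hSγ] at hTc
  have hαβγ : Λ.src α = Λ.rng (Λ.comp β γ) := by rwa [Λ.rng_comp _ _ hβγ]
  have hβ : Λ.segment (Λ.comp (Λ.comp (Λ.comp α β) γ) c) (Λ.deg α) (Λ.deg (Λ.comp α β)) = β := by
    rw [Λ.comp_assoc _ _ _ hSγ hγc, Λ.deg_comp _ _ hαβ,
      segment_comp_comp hαβ (by rwa [Λ.rng_comp _ _ hγc])]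
  have hγ : Λ.segment (Λ.comp (Λ.comp (Λ.comp α β) γ) c) (Λ.deg (Λ.comp α β))
      (Λ.deg (Λ.comp (Λ.comp α β) γ)) = γ := by
    rw [Λ.deg_comp _ _ hSγ, segment_comp_comp hSγ hγc]
  have hβγ' : Λ.segment (Λ.comp (Λ.comp (Λ.comp α β) γ) c) (Λ.deg α)
      (Λ.deg (Λ.comp (Λ.comp α β) γ)) = Λ.comp β γ := by
    rw [Λ.comp_assoc _ _ _ hαβ hβγ, Λ.deg_comp _ _ hαβγ,
      segment_comp_comp hαβγ (by rwa [Λ.src_comp _ _ hβγ])]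
  rw [hβ, hγ, hβγ']
  exact ⟨hβγ, rfl⟩

theorem src_segment (hpq : p ≤ q) (hq : q ≤ Λ.deg t) :
    Λ.src (Λ.segment t p q) = Λ.src (Λ.segment t 0 q) := by
  obtain ⟨hsrc, hcomp⟩ := comp_segment zero_le hpq hq
  rw [← hcomp, Λ.src_comp _ _ hsrc]

theorem rng_segment (hpq : p ≤ q) (hq : q ≤ Λ.deg t) :
    Λ.rng (Λ.segment t p q) = Λ.src (Λ.segment t 0 p) :=
  (comp_segment zero_le hpq hq).1.symm

theorem src_segment_deg (hp : p ≤ Λ.deg t) : Λ.src (Λ.segment t p (Λ.deg t)) = Λ.src t := by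
  obtain ⟨hsrc, hcomp⟩ := comp_segment zero_le hp le_rfl
  conv_rhs => rw [← segment_zero_deg t, ← hcomp, Λ.src_comp _ _ hsrc]

end Segment

def IsPrefix (Λ : KGraph k) (a t : Λ.Path) : Prop := ∃ b, Λ.src a = Λ.rng b ∧ Λ.comp a b = t

section IsPrefix

variable {t a b c : Λ.Path} {p q : Fin k → ℕ}

theorem isPrefix_comp (hab : Λ.src a = Λ.rng b) : Λ.IsPrefix a (Λ.comp a b) := ⟨b, hab, rfl⟩

theorem IsPrefix.refl (a : Λ.Path) : Λ.IsPrefix a a :=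
  ⟨_, (Λ.rng_vertex _).symm, Λ.comp_vertex a⟩

theorem IsPrefix.trans (hab : Λ.IsPrefix a b) (hbc : Λ.IsPrefix b c) : Λ.IsPrefix a c := by
  obtain ⟨x, hax, rfl⟩ := hab
  obtain ⟨y, hxy, rfl⟩ := hbc
  rw [Λ.src_comp _ _ hax] at hxy
  exact ⟨Λ.comp x y, by rwa [Λ.rng_comp _ _ hxy], (Λ.comp_assoc _ _ _ hax hxy).symm⟩

theorem IsPrefix.deg_le (h : Λ.IsPrefix a t) : Λ.deg a ≤ Λ.deg t := by
  obtain ⟨b, hab, rfl⟩ := h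
  rw [Λ.deg_comp _ _ hab]
  exact le_self_add

theorem IsPrefix.segment_eq (h : Λ.IsPrefix a t) (hpq : p ≤ q) (hq : q ≤ Λ.deg a) :
    Λ.segment t p q = Λ.segment a p q := by
  obtain ⟨b, hab, rfl⟩ := h
  exact segment_comp_left hab hpq hq

theorem isPrefix_segment_zero (hq : q ≤ Λ.deg t) : Λ.IsPrefix (Λ.segment t 0 q) t := by
  obtain ⟨hsrc, hcomp⟩ := comp_segment zero_le hq le_rfl
  exact ⟨_, hsrc, hcomp.trans (segment_zero_deg t)⟩

theorem isPrefix_iff : Λ.IsPrefix a t ↔ Λ.deg a ≤ Λ.deg t ∧ Λ.segment t 0 (Λ.deg a) = a := by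
  refine ⟨fun h => ⟨h.deg_le, ?_⟩, fun ⟨hle, h⟩ => h ▸ isPrefix_segment_zero hle⟩
  rw [h.segment_eq zero_le le_rfl, segment_zero_deg]

theorem segment_segment {a b : Fin k → ℕ} (hab : a ≤ b) (hb : b ≤ Λ.deg t) (hpq : p ≤ q)
    (hq : a + q ≤ b) : Λ.segment (Λ.segment t a b) p q = Λ.segment t (a + p) (a + q) := by
  obtain ⟨hsrc, hcomp⟩ := comp_segment zero_le hab hb
  have h := segment_comp_right hsrc hpq
    (by rw [deg_segment hab hb]; exact le_tsub_of_add_le_left hq)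
  rw [deg_segment_zero (hab.trans hb), hcomp] at h
  rw [← h, (isPrefix_segment_zero hb).segment_eq (add_le_add le_rfl hpq)
    (by rwa [deg_segment_zero hb])]

theorem mem_minPairs_segment (ha : Λ.IsPrefix a t) (hb : Λ.IsPrefix b t) :
    (Λ.segment t (Λ.deg a) (Λ.deg a ⊔ Λ.deg b), Λ.segment t (Λ.deg b) (Λ.deg a ⊔ Λ.deg b)) ∈
      Λ.minPairs a b := by
  have hM : Λ.deg a ⊔ Λ.deg b ≤ Λ.deg t := sup_le ha.deg_le hb.deg_le
  obtain ⟨ha₁, ha₂⟩ := comp_segment zero_le le_sup_left hM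
  obtain ⟨hb₁, hb₂⟩ := comp_segment zero_le le_sup_right hM
  rw [(isPrefix_iff.mp ha).2] at ha₁ ha₂
  rw [(isPrefix_iff.mp hb).2] at hb₁ hb₂
  refine ⟨ha₁, hb₁, ha₂.trans hb₂.symm, ?_⟩
  rw [ha₂, deg_segment_zero hM]

theorem minPairs_nonempty_of_comp_eq {x y : Λ.Path} (hax : Λ.src a = Λ.rng x)
    (hby : Λ.src b = Λ.rng y) (h : Λ.comp a x = Λ.comp b y) : (Λ.minPairs a b).Nonempty :=
  ⟨_, mem_minPairs_segment (isPrefix_comp hax) (h ▸ isPrefix_comp hby)⟩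

end IsPrefix

section ExtSet

variable {μ : Λ.Path} {E : Set Λ.Path}

theorem extSet_finite (hΛ : Λ.FinitelyAligned) (μ : Λ.Path) (hE : E.Finite) :
    (Λ.extSet μ E).Finite := by
  refine (hE.biUnion fun q _ => (hΛ μ q).image Prod.fst).subset ?_
  simp only [extSet, Set.subset_def, Set.mem_iUnion]
  rintro ρ ⟨q, hq, τ, hρτ⟩
  exact ⟨q, hq, (ρ, τ), hρτ, rfl⟩

theorem rng_eq_and_ne_vertex_of_mem_extSet {ρ : Λ.Path} (hμ : ∀ q ∈ E, ¬Λ.IsPrefix q μ)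
    (hρ : ρ ∈ Λ.extSet μ E) : Λ.rng ρ = Λ.src μ ∧ ρ ≠ Λ.vertex (Λ.src μ) := by
  simp only [extSet, Set.mem_iUnion] at hρ
  obtain ⟨q, hq, τ, hμρ, hqτ, hcomp, -⟩ := hρ
  refine ⟨hμρ.symm, fun hρ => hμ q hq ⟨τ, hqτ, ?_⟩⟩
  rw [← hcomp, hρ]
  exact Λ.comp_vertex μ

/-- For `r(a) = s(μ)`, exhaustiveness gives `(ρ', τ') ∈ Λ^min(μa, q)` with `q ∈ E`; the minimal
common extension of `μ` and `q` inside `μaρ'` is `μρ` with `ρ ∈ Ext(μ; E)`, and `ρ`, `a` are both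
initial segments of `aρ'`. -/
theorem exhaustive_extSet (hE : Λ.Exhaustive (Λ.rng μ) E) :
    Λ.Exhaustive (Λ.src μ) (Λ.extSet μ E) := by
  intro a ha
  obtain ⟨q, hq, ⟨ρ', τ'⟩, hμaρ', hqτ', hcomp, -⟩ := hE (Λ.comp μ a) (Λ.rng_comp _ _ ha.symm)
  have haρ' : Λ.src a = Λ.rng ρ' := by rwa [Λ.src_comp _ _ ha.symm] at hμaρ'
  set T := Λ.comp (Λ.comp μ a) ρ'
  have hμT : Λ.IsPrefix μ T := (isPrefix_comp ha.symm).trans (isPrefix_comp hμaρ')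
  have hqT : Λ.IsPrefix q T := hcomp ▸ isPrefix_comp hqτ'
  refine ⟨_, Set.mem_biUnion hq ⟨_, mem_minPairs_segment hμT hqT⟩, ?_⟩
  have hM : Λ.deg μ ⊔ Λ.deg q ≤ Λ.deg T := sup_le hμT.deg_le hqT.deg_le
  obtain ⟨h₁, h₂⟩ := comp_segment le_sup_left hM le_rfl
  obtain ⟨h₃, h₄⟩ := comp_segment zero_le hμT.deg_le le_rfl
  rw [(isPrefix_iff.mp hμT).2, segment_zero_deg] at h₄
  rw [(isPrefix_iff.mp hμT).2] at h₃
  have hext : Λ.comp a ρ' = Λ.comp (Λ.segment T (Λ.deg μ) (Λ.deg μ ⊔ Λ.deg q))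
      (Λ.segment T (Λ.deg μ ⊔ Λ.deg q) (Λ.deg T)) := by
    rw [h₂]
    refine (eq_of_comp_eq_comp (by rw [Λ.rng_comp _ _ haρ', ha]) h₃ rfl ?_).2
    rw [h₄]
    exact (Λ.comp_assoc _ _ _ ha.symm haρ').symm
  exact minPairs_nonempty_of_comp_eq haρ' h₁ hext

theorem fe_extSet (hΛ : Λ.FinitelyAligned) (hE : Λ.FE (Λ.rng μ) E)
    (hμ : ∀ q ∈ E, ¬Λ.IsPrefix q μ) : Λ.FE (Λ.src μ) (Λ.extSet μ E) :=
  ⟨extSet_finite hΛ μ hE.1, fun _ hρ => rng_eq_and_ne_vertex_of_mem_extSet hμ hρ,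
    exhaustive_extSet hE.2.2⟩

end ExtSet

def LeDeg (q : Fin k → ℕ) (m : Fin k → ℕ∞) : Prop := ∀ i, (q i : ℕ∞) ≤ m i

section LeDeg

variable {l n q r : Fin k → ℕ} {m : Fin k → ℕ∞}

theorem LeDeg.mono (h : LeDeg r m) (hqr : q ≤ r) : LeDeg q m :=
  fun i => (Nat.cast_le.mpr (hqr i)).trans (h i)

theorem LeDeg.sup (hq : LeDeg q m) (hr : LeDeg r m) : LeDeg (q ⊔ r) m :=
  fun i => by rw [Pi.sup_apply, Nat.mono_cast.map_max]; exact max_le (hq i) (hr i)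

theorem leDeg_zero (m : Fin k → ℕ∞) : LeDeg 0 m := fun i => by simp

theorem leDeg_sub_iff (hn : LeDeg n m) : LeDeg q (fun i => m i - n i) ↔ LeDeg (n + q) m :=
  forall_congr' fun i => by
    rw [Pi.add_apply, Nat.cast_add, (ENat.addLECancellable_natCast _).le_tsub_iff_left (hn i)]

theorem leDeg_tsub_iff : LeDeg (q - l) m ↔ LeDeg q (fun i => l i + m i) :=
  forall_congr' fun i => by rw [Pi.sub_apply, ENat.natCast_sub, tsub_le_iff_left]

theorem leDeg_iSup_iff {f : ℕ → Fin k → ℕ} (hf : Monotone f) :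
    LeDeg q (fun i => ⨆ j, (f j i : ℕ∞)) ↔ ∃ j, q ≤ f j := by
  refine ⟨fun hq => ?_, fun ⟨j, hj⟩ i =>
    (Nat.cast_le.mpr (hj i)).trans (le_iSup (fun j => (f j i : ℕ∞)) j)⟩
  have hcoord : ∀ i, ∃ j, q i ≤ f j i := by
    intro i
    rcases hqi : q i with _ | m
    · exact ⟨0, Nat.zero_le _⟩
    · have := hq i
      rw [hqi] at this
      obtain ⟨j, hj⟩ := lt_iSup_iff.mp ((Nat.cast_lt.mpr (Nat.lt_succ_self m)).trans_le this)
      exact ⟨j, Nat.cast_lt.mp hj⟩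
  choose J hJ using hcoord
  exact ⟨Finset.univ.sup J, fun i => (hJ i).trans (hf (Finset.le_sup (Finset.mem_univ i)) i)⟩

end LeDeg

namespace BoundaryPath

variable {x : Λ.BoundaryPath} {a b p q : Fin k → ℕ}

theorem rng_seg (hpq : p ≤ q) (hq : LeDeg q x.deg) : Λ.rng (x.seg p q) = x.vtx p :=
  (x.src_seg p p q le_rfl hpq hq).symm

theorem src_seg_eq_vtx (hpq : p ≤ q) (hq : LeDeg q x.deg) : Λ.src (x.seg p q) = x.vtx q := by
  rw [x.src_seg p q q hpq le_rfl hq, x.seg_self q hq, Λ.rng_vertex]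
  rfl

theorem deg_seg_zero (hq : LeDeg q x.deg) : Λ.deg (x.seg 0 q) = q := by
  rw [x.deg_seg 0 q zero_le hq, tsub_zero]

theorem isPrefix_seg (hpq : p ≤ q) (hq : LeDeg q x.deg) : Λ.IsPrefix (x.seg 0 p) (x.seg 0 q) :=
  ⟨_, x.src_seg 0 p q zero_le hpq hq, x.comp_seg 0 p q zero_le hpq hq⟩

theorem segment_seg_zero (hpq : p ≤ q) (hqb : q ≤ b) (hb : LeDeg b x.deg) :
    Λ.segment (x.seg 0 b) p q = x.seg p q := by
  have hq := hb.mono hqb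
  have := segment_comp_comp (x.src_seg 0 p q zero_le hpq hq) (x.src_seg p q b hpq hqb hb)
  rwa [x.comp_seg 0 p q zero_le hpq hq, x.comp_seg 0 q b (zero_le.trans hpq) hqb hb,
    deg_seg_zero (hq.mono hpq), x.deg_seg p q hpq hq, add_tsub_cancel_of_le hpq] at this

theorem segment_seg (hab : a ≤ b) (hb : LeDeg b x.deg) (hpq : p ≤ q) (hq : a + q ≤ b) :
    Λ.segment (x.seg a b) p q = x.seg (a + p) (a + q) := by
  have h := segment_comp_right (x.src_seg 0 a b zero_le hab hb) hpq
    (by rw [x.deg_seg a b hab hb]; exact le_tsub_of_add_le_left hq)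
  rw [x.comp_seg 0 a b zero_le hab hb, deg_seg_zero (hb.mono hab),
    segment_seg_zero (add_le_add le_rfl hpq) hq hb] at h
  exact h.symm

end BoundaryPath

/-- Data for a boundary path of degree `deg` with segments `x(p,q) = (approx q)(p,q)`. -/
structure ApproxPath (Λ : KGraph k) where
  deg : Fin k → ℕ∞
  approx : (Fin k → ℕ) → Λ.Path
  le_deg_approx : ∀ q, LeDeg q deg → q ≤ Λ.deg (approx q)
  segment_approx : ∀ q r, q ≤ r → LeDeg r deg →
    Λ.segment (approx r) 0 q = Λ.segment (approx q) 0 q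

namespace ApproxPath

variable (y : Λ.ApproxPath) {n N p q r : Fin k → ℕ}

theorem segment_approx_of_le (hpq : p ≤ q) (hqr : q ≤ r) (hr : LeDeg r y.deg) :
    Λ.segment (y.approx r) p q = Λ.segment (y.approx q) p q := by
  have hq := y.le_deg_approx q (hr.mono hqr)
  have hr' := hqr.trans (y.le_deg_approx r hr)
  rw [(isPrefix_segment_zero hr').segment_eq hpq (deg_segment_zero hr').ge,
    y.segment_approx q r hqr hr, ← (isPrefix_segment_zero hq).segment_eq hpq (deg_segment_zero hq).ge]

def BoundaryAt (n : Fin k → ℕ) : Prop :=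
  ∀ E, Λ.FE (Λ.src (Λ.segment (y.approx n) 0 n)) E →
    ∃ p ∈ E, LeDeg (n + Λ.deg p) y.deg ∧ Λ.segment (y.approx (n + Λ.deg p)) n (n + Λ.deg p) = p

noncomputable def toBoundaryPath (h : ∀ n, LeDeg n y.deg → y.BoundaryAt n) :
    Λ.BoundaryPath where
  deg := y.deg
  seg p q := Λ.segment (y.approx q) p q
  deg_seg p q hpq hq := deg_segment hpq (y.le_deg_approx q hq)
  seg_self p hp := segment_self (y.le_deg_approx p hp)
  src_seg p q r hpq hqr hr := by
    rw [← y.segment_approx_of_le hpq hqr hr]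
    exact (comp_segment hpq hqr (y.le_deg_approx r hr)).1
  comp_seg p q r hpq hqr hr := by
    rw [← y.segment_approx_of_le hpq hqr hr]
    exact (comp_segment hpq hqr (y.le_deg_approx r hr)).2
  boundary n hn E hE := by
    rw [src_segment le_rfl (y.le_deg_approx n hn)] at hE
    exact h n hn E hE

/-- Either some `q ∈ E` is an initial segment of `μ = y(n,N)`, or `Ext(μ; E) ∈ FE(s(μ))` and
`y` passes at `N` through some `ρ ∈ Ext(μ; E)`, so that `y(n, N + d(ρ)) = μρ ∈ qΛ`. -/
theorem boundaryAt_of_le (hΛ : Λ.FinitelyAligned) (hnN : n ≤ N) (hN : LeDeg N y.deg)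
    (h : y.BoundaryAt N) : y.BoundaryAt n := by
  intro E hE
  suffices ∃ q ∈ E, ∃ M, n ≤ M ∧ LeDeg M y.deg ∧ Λ.IsPrefix q (Λ.segment (y.approx M) n M) by
    obtain ⟨q, hq, M, hnM, hM, hpre⟩ := this
    have hMT := y.le_deg_approx M hM
    have hqM : n + Λ.deg q ≤ M := by
      have := hpre.deg_le
      rwa [deg_segment hnM hMT, le_tsub_iff_left hnM] at this
    refine ⟨q, hq, hM.mono hqM, ?_⟩
    rw [← y.segment_approx_of_le le_self_add hqM hM]
    conv_rhs => rw [← (isPrefix_iff.mp hpre).2, segment_segment hnM hMT zero_le hqM, add_zero]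
  have hNT := y.le_deg_approx N hN
  set μ := Λ.segment (y.approx N) n N
  by_cases hμ : ∃ q ∈ E, Λ.IsPrefix q μ
  · obtain ⟨q, hq, hqμ⟩ := hμ
    exact ⟨q, hq, N, hnN, hN, hqμ⟩
  have hrng : Λ.rng μ = Λ.src (Λ.segment (y.approx n) 0 n) := by
    rw [rng_segment hnN hNT, y.segment_approx n N hnN hN]
  have hsrc : Λ.src μ = Λ.src (Λ.segment (y.approx N) 0 N) := src_segment hnN hNT
  obtain ⟨ρ, hρ, hM, hρseg⟩ :=
    h _ (hsrc ▸ fe_extSet hΛ (hrng ▸ hE) fun q hq hqμ => hμ ⟨q, hq, hqμ⟩)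
  simp only [extSet, Set.mem_iUnion] at hρ
  obtain ⟨q, hq, τ, -, hqτ, hcomp, -⟩ := hρ
  have hNM : N ≤ N + Λ.deg ρ := le_self_add
  obtain ⟨-, hsplit⟩ := comp_segment hnN hNM (y.le_deg_approx _ hM)
  rw [hρseg, y.segment_approx_of_le hnN hNM hM, hcomp] at hsplit
  exact ⟨q, hq, N + Λ.deg ρ, hnN.trans hNM, hM, hsplit ▸ isPrefix_comp hqτ⟩

end ApproxPath

namespace BoundaryPath

variable {x : Λ.BoundaryPath} {l : Λ.Path} {q : Fin k → ℕ}

variable (x) in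
noncomputable def shift (n : Fin k → ℕ) (hn : LeDeg n x.deg) : Λ.BoundaryPath :=
  ApproxPath.toBoundaryPath
    { deg := fun i => x.deg i - n i
      approx := fun q => x.seg n (n + q)
      le_deg_approx := fun q hq => by
        rw [x.deg_seg n (n + q) le_self_add ((leDeg_sub_iff hn).mp hq), add_tsub_cancel_left]
      segment_approx := fun q r hqr hr => by
        have hr' := (leDeg_sub_iff hn).mp hr
        have hqr' : n + q ≤ n + r := add_le_add le_rfl hqr
        rw [segment_seg le_self_add hr' zero_le hqr',
          segment_seg le_self_add (hr'.mono hqr') zero_le le_rfl] }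
    fun m hm E hE => by
      have hm' := (leDeg_sub_iff hn).mp hm
      rw [segment_seg le_self_add hm' zero_le le_rfl, add_zero, src_seg_eq_vtx le_self_add hm']
        at hE
      obtain ⟨p, hp, hle, hseg⟩ := x.boundary (n + m) hm' E hE
      rw [add_assoc] at hle hseg
      exact ⟨p, hp, (leDeg_sub_iff hn).mpr hle,
        by rw [segment_seg le_self_add hle le_self_add le_rfl, hseg]⟩

theorem isShift_shift (n : Fin k → ℕ) (hn : LeDeg n x.deg) : Λ.IsShift n x (x.shift n hn) :=
  ⟨hn, fun _ => rfl,
    fun _ _ hpq hq => segment_seg le_self_add ((leDeg_sub_iff hn).mp hq) hpq le_rfl⟩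

theorem src_eq_rng_seg_zero (hl : Λ.src l = x.rng) (hq : LeDeg q x.deg) :
    Λ.src l = Λ.rng (x.seg 0 q) :=
  hl.trans (rng_seg zero_le hq).symm

theorem deg_comp_seg_zero (hl : Λ.src l = x.rng) (hq : LeDeg q x.deg) :
    Λ.deg (Λ.comp l (x.seg 0 q)) = Λ.deg l + q := by
  rw [Λ.deg_comp _ _ (src_eq_rng_seg_zero hl hq), deg_seg_zero hq]

variable (x) in
/-- With truncated subtraction, `l · x(0, q - d(l))` has degree `q ⊔ d(l) ≥ q`. -/
noncomputable def concatApprox (l : Λ.Path) (hl : Λ.src l = x.rng) : Λ.ApproxPath where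
  deg i := Λ.deg l i + x.deg i
  approx q := Λ.comp l (x.seg 0 (q - Λ.deg l))
  le_deg_approx q hq := by
    rw [deg_comp_seg_zero hl (leDeg_tsub_iff.mpr hq)]
    exact le_add_tsub
  segment_approx q r hqr hr := by
    have hr' := leDeg_tsub_iff.mpr hr
    have hqr' : q - Λ.deg l ≤ r - Λ.deg l := tsub_le_tsub_right hqr _
    have hl' := src_eq_rng_seg_zero hl (hr'.mono hqr')
    obtain ⟨σ, hσ, hcomp⟩ := isPrefix_seg hqr' hr'
    refine IsPrefix.segment_eq ⟨σ, ?_, ?_⟩ zero_le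
      (by rw [deg_comp_seg_zero hl (hr'.mono hqr')]; exact le_add_tsub)
    · rwa [Λ.src_comp _ _ hl']
    · rw [Λ.comp_assoc _ _ _ hl' hσ, hcomp]

theorem boundaryAt_concatApprox (hl : Λ.src l = x.rng) {n : Fin k → ℕ} (hn : Λ.deg l ≤ n)
    (hnx : LeDeg n (x.concatApprox l hl).deg) : (x.concatApprox l hl).BoundaryAt n := by
  obtain ⟨m, rfl⟩ := exists_add_of_le hn
  have hm : LeDeg m x.deg := by simpa only [add_tsub_cancel_left] using leDeg_tsub_iff.mpr hnx
  intro E hE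
  simp only [concatApprox, add_tsub_cancel_left] at hE
  rw [← deg_comp_seg_zero hl hm, segment_zero_deg, Λ.src_comp _ _ (src_eq_rng_seg_zero hl hm),
    src_seg_eq_vtx zero_le hm] at hE
  obtain ⟨p, hp, hle, hseg⟩ := x.boundary m hm E hE
  refine ⟨p, hp, leDeg_tsub_iff.mp (by rwa [add_assoc, add_tsub_cancel_left]), ?_⟩
  simp only [concatApprox]
  rw [add_assoc, add_tsub_cancel_left, segment_comp_right (src_eq_rng_seg_zero hl hle) le_self_add
    (deg_seg_zero hle).ge, segment_seg_zero le_self_add le_rfl hle, hseg]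

noncomputable def concat (hΛ : Λ.FinitelyAligned) (l : Λ.Path) (x : Λ.BoundaryPath)
    (hl : Λ.src l = x.rng) : Λ.BoundaryPath :=
  (x.concatApprox l hl).toBoundaryPath fun _ hn =>
    (x.concatApprox l hl).boundaryAt_of_le hΛ le_sup_left (hn.sup fun _ => le_self_add)
      (boundaryAt_concatApprox hl le_sup_right (hn.sup fun _ => le_self_add))

theorem isConcat_concat (hΛ : Λ.FinitelyAligned) (hl : Λ.src l = x.rng) :
    Λ.IsConcat l x (concat hΛ l x hl) := by
  refine ⟨⟨fun _ => le_self_add,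
    fun _ => (ENat.addLECancellable_natCast _).add_tsub_cancel_left.symm, fun p q hpq hq => ?_⟩, ?_⟩
  · show x.seg p q = Λ.segment (Λ.comp l (x.seg 0 (Λ.deg l + q - Λ.deg l))) _ _
    rw [add_tsub_cancel_left, segment_comp_right (src_eq_rng_seg_zero hl hq) hpq
      (deg_seg_zero hq).ge, segment_seg_zero hpq le_rfl hq]
  · show Λ.segment (Λ.comp l (x.seg 0 (Λ.deg l - Λ.deg l))) 0 (Λ.deg l) = l
    rw [tsub_self, segment_comp_left (src_eq_rng_seg_zero hl (leDeg_zero _)) zero_le le_rfl,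
      segment_zero_deg]

end BoundaryPath

section Chain

variable {μ : ℕ → Λ.Path}

theorem isPrefix_of_chain (hμ : ∀ j, Λ.IsPrefix (μ j) (μ (j + 1))) {i j : ℕ} (hij : i ≤ j) :
    Λ.IsPrefix (μ i) (μ j) := by
  induction j, hij using Nat.le_induction with
  | base => exact IsPrefix.refl _
  | succ j _ ih => exact ih.trans (hμ j)

theorem monotone_deg_chain (hμ : ∀ j, Λ.IsPrefix (μ j) (μ (j + 1))) :
    Monotone fun j => Λ.deg (μ j) :=
  fun _ _ hij => (isPrefix_of_chain hμ hij).deg_le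

theorem segment_chain_eq (hμ : ∀ j, Λ.IsPrefix (μ j) (μ (j + 1))) {i j : ℕ} {p q : Fin k → ℕ}
    (hpq : p ≤ q) (hi : q ≤ Λ.deg (μ i)) (hj : q ≤ Λ.deg (μ j)) :
    Λ.segment (μ i) p q = Λ.segment (μ j) p q := by
  rcases le_total i j with h | h
  · exact ((isPrefix_of_chain hμ h).segment_eq hpq hi).symm
  · exact (isPrefix_of_chain hμ h).segment_eq hpq hj

noncomputable def chainApprox (hμ : ∀ j, Λ.IsPrefix (μ j) (μ (j + 1))) : Λ.ApproxPath where
  deg i := ⨆ j, (Λ.deg (μ j) i : ℕ∞)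
  approx q := μ (Classical.epsilon fun j => q ≤ Λ.deg (μ j))
  le_deg_approx _ hq := Classical.epsilon_spec ((leDeg_iSup_iff (monotone_deg_chain hμ)).mp hq)
  segment_approx _ _ hqr hr := segment_chain_eq hμ zero_le
    (hqr.trans (Classical.epsilon_spec ((leDeg_iSup_iff (monotone_deg_chain hμ)).mp hr)))
    (Classical.epsilon_spec ((leDeg_iSup_iff (monotone_deg_chain hμ)).mp (hr.mono hqr)))

theorem segment_chainApprox (hμ : ∀ j, Λ.IsPrefix (μ j) (μ (j + 1))) {j : ℕ} {p q : Fin k → ℕ}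
    (hpq : p ≤ q) (hq : q ≤ Λ.deg (μ j)) :
    Λ.segment ((chainApprox hμ).approx q) p q = Λ.segment (μ j) p q :=
  segment_chain_eq hμ hpq ((chainApprox hμ).le_deg_approx q
    ((leDeg_iSup_iff (monotone_deg_chain hμ)).mpr ⟨j, hq⟩)) hq

end Chain

open Classical in
noncomputable def extendStep (μ : Λ.Path) (nF : (Fin k → ℕ) × Finset Λ.Path) : Λ.Path :=
  if h : ∃ ρ, Λ.src μ = Λ.rng ρ ∧ ∃ q ∈ nF.2, nF.1 + Λ.deg q ≤ Λ.deg (Λ.comp μ ρ) ∧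
      Λ.segment (Λ.comp μ ρ) nF.1 (nF.1 + Λ.deg q) = q
  then Λ.comp μ h.choose else μ

theorem isPrefix_extendStep (μ : Λ.Path) (nF : (Fin k → ℕ) × Finset Λ.Path) :
    Λ.IsPrefix μ (extendStep μ nF) := by
  unfold extendStep
  split_ifs with h
  · exact isPrefix_comp h.choose_spec.1
  · exact IsPrefix.refl μ

/-- Exhaustiveness of `F` at `μ(n)`, applied to `μ(n, d μ)`, provides the extension. -/
theorem extendStep_spec {μ : Λ.Path} {n : Fin k → ℕ} {F : Finset Λ.Path} (hn : n ≤ Λ.deg μ)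
    (hF : Λ.FE (Λ.src (Λ.segment μ 0 n)) F) :
    ∃ q ∈ F, n + Λ.deg q ≤ Λ.deg (extendStep μ (n, F)) ∧
      Λ.segment (extendStep μ (n, F)) n (n + Λ.deg q) = q := by
  suffices h : ∃ ρ, Λ.src μ = Λ.rng ρ ∧ ∃ q ∈ F, n + Λ.deg q ≤ Λ.deg (Λ.comp μ ρ) ∧
      Λ.segment (Λ.comp μ ρ) n (n + Λ.deg q) = q by
    rw [extendStep, dif_pos h]
    exact h.choose_spec.2
  obtain ⟨hαβ, hcomp⟩ := comp_segment zero_le hn le_rfl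
  rw [segment_zero_deg] at hcomp
  obtain ⟨q, hq, ⟨ρ, τ⟩, hβρ, hqτ, hβq, -⟩ := hF.2.2 _ (rng_segment hn le_rfl)
  have hμρ : Λ.src μ = Λ.rng ρ := by rwa [src_segment_deg hn] at hβρ
  have hαq : Λ.src (Λ.segment μ 0 n) = Λ.rng q := by
    rw [hαβ, ← Λ.rng_comp _ _ hβρ, hβq, Λ.rng_comp _ _ hqτ]
  have hμρ' : Λ.comp μ ρ = Λ.comp (Λ.comp (Λ.segment μ 0 n) q) τ := by
    rw [Λ.comp_assoc _ _ _ hαq hqτ, ← hβq, ← Λ.comp_assoc _ _ _ hαβ hβρ, hcomp]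
  have hdeg : Λ.deg (Λ.segment μ 0 n) = n := deg_segment_zero hn
  refine ⟨ρ, hμρ, q, hq, ?_, ?_⟩
  · rw [hμρ', Λ.deg_comp _ _ (by rwa [Λ.src_comp _ _ hαq]), Λ.deg_comp _ _ hαq, hdeg]
    exact le_self_add
  · have h := segment_comp_comp hαq hqτ
    rwa [hdeg, ← hμρ'] at h

theorem exists_boundaryPath (v : Λ.Obj) : ∃ x : Λ.BoundaryPath, x.rng = v := by
  have := Λ.countable_path
  obtain ⟨g, hg⟩ := exists_surjective_nat ((Fin k → ℕ) × Finset Λ.Path)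
  -- `e` takes every value at arbitrarily late times
  let e : ℕ → (Fin k → ℕ) × Finset Λ.Path := fun j => g (Nat.unpair j).2
  let μ : ℕ → Λ.Path := fun j => Nat.rec (Λ.vertex v) (fun j μj => extendStep μj (e j)) j
  have hμ : ∀ j, Λ.IsPrefix (μ j) (μ (j + 1)) := fun j => isPrefix_extendStep _ _
  have hmono := monotone_deg_chain hμ
  have hbdry : ∀ n, LeDeg n (chainApprox hμ).deg → (chainApprox hμ).BoundaryAt n := by
    intro n hn E hE
    obtain ⟨j₀, hj₀⟩ := (leDeg_iSup_iff hmono).mp hn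
    obtain ⟨c, hc⟩ := hg (n, hE.1.toFinset)
    have hj : e (Nat.pair j₀ c) = (n, hE.1.toFinset) := by simp only [e, Nat.unpair_pair, hc]
    have hnj := hj₀.trans (hmono (Nat.left_le_pair j₀ c))
    have hF : Λ.FE (Λ.src (Λ.segment (μ (Nat.pair j₀ c)) 0 n)) hE.1.toFinset := by
      rwa [hE.1.coe_toFinset, ← segment_chainApprox hμ zero_le hnj]
    obtain ⟨q, hq, hle, hseg⟩ := extendStep_spec hnj hF
    rw [← hj] at hle hseg
    exact ⟨q, hE.1.mem_toFinset.mp hq, (leDeg_iSup_iff hmono).mpr ⟨Nat.pair j₀ c + 1, hle⟩,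
      (segment_chainApprox hμ (j := Nat.pair j₀ c + 1) le_self_add hle).trans hseg⟩
  refine ⟨(chainApprox hμ).toBoundaryPath hbdry, ?_⟩
  show Λ.src (Λ.segment _ 0 0) = v
  rw [segment_chainApprox hμ (j := 0) le_rfl zero_le]
  show Λ.src (Λ.segment (Λ.vertex v) 0 0) = v
  rw [← Λ.deg_vertex v, src_segment_deg le_rfl, Λ.src_vertex]

section Cylinder

variable {x : Λ.BoundaryPath} {a b t : Λ.Path} {q : Fin k → ℕ}

theorem mem_ZC_iff : x ∈ Λ.ZC a ↔ LeDeg (Λ.deg a) x.deg ∧ x.seg 0 (Λ.deg a) = a :=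
  ⟨fun ⟨_, hsh, hseg⟩ => ⟨hsh.1, hseg⟩,
    fun ⟨hle, hseg⟩ => ⟨x.shift _ hle, x.isShift_shift _ hle, hseg⟩⟩

theorem mem_ZC_seg (hq : LeDeg q x.deg) : x ∈ Λ.ZC (x.seg 0 q) := by
  rw [mem_ZC_iff, BoundaryPath.deg_seg_zero hq]
  exact ⟨hq, rfl⟩

theorem src_eq_vtx_of_mem_ZC (hx : x ∈ Λ.ZC a) : Λ.src a = x.vtx (Λ.deg a) := by
  obtain ⟨hle, hseg⟩ := mem_ZC_iff.mp hx
  conv_lhs => rw [← hseg]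
  exact BoundaryPath.src_seg_eq_vtx zero_le hle

theorem mem_ZC_of_isPrefix (hx : x ∈ Λ.ZC t) (h : Λ.IsPrefix a t) : x ∈ Λ.ZC a := by
  obtain ⟨hle, hseg⟩ := mem_ZC_iff.mp hx
  refine mem_ZC_iff.mpr ⟨hle.mono h.deg_le, ?_⟩
  rw [← BoundaryPath.segment_seg_zero zero_le h.deg_le hle, hseg, (isPrefix_iff.mp h).2]

theorem isPrefix_seg_of_mem_ZC (hx : x ∈ Λ.ZC a) (haq : Λ.deg a ≤ q) (hq : LeDeg q x.deg) :
    Λ.IsPrefix a (x.seg 0 q) := by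
  have := BoundaryPath.isPrefix_seg haq hq
  rwa [(mem_ZC_iff.mp hx).2] at this

theorem mem_ZC_comp (hx : x ∈ Λ.ZC a) (hle : LeDeg (Λ.deg a + Λ.deg b) x.deg)
    (hseg : x.seg (Λ.deg a) (Λ.deg a + Λ.deg b) = b) : x ∈ Λ.ZC (Λ.comp a b) := by
  obtain ⟨ha, hxa⟩ := mem_ZC_iff.mp hx
  have hsrc := x.src_seg 0 _ _ zero_le le_self_add hle
  rw [hxa, hseg] at hsrc
  refine mem_ZC_iff.mpr ⟨by rwa [Λ.deg_comp _ _ hsrc], ?_⟩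
  rw [Λ.deg_comp _ _ hsrc, ← x.comp_seg 0 _ _ zero_le le_self_add hle, hxa, hseg]

theorem exists_mem_minPairs_of_mem_ZC (ha : x ∈ Λ.ZC a) (hb : x ∈ Λ.ZC b) :
    ∃ ρ τ, (ρ, τ) ∈ Λ.minPairs a b ∧ x ∈ Λ.ZC (Λ.comp a ρ) := by
  have hM := (mem_ZC_iff.mp ha).1.sup (mem_ZC_iff.mp hb).1
  set T := x.seg 0 (Λ.deg a ⊔ Λ.deg b)
  have hT : Λ.deg T = Λ.deg a ⊔ Λ.deg b := BoundaryPath.deg_seg_zero hM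
  have hpa : Λ.IsPrefix a T := isPrefix_seg_of_mem_ZC ha le_sup_left hM
  refine ⟨_, _, mem_minPairs_segment hpa (isPrefix_seg_of_mem_ZC hb le_sup_right hM), ?_⟩
  have hcomp := (comp_segment zero_le le_sup_left hT.ge).2
  rw [(isPrefix_iff.mp hpa).2, ← hT, segment_zero_deg, hT] at hcomp
  rw [hcomp]
  exact mem_ZC_seg hM

theorem minPairs_nonempty_of_mem_ZC_comp {P : Λ.Path} (hPa : Λ.src P = Λ.rng a)
    (hPb : Λ.src P = Λ.rng b) (ha : x ∈ Λ.ZC (Λ.comp P a)) (hb : x ∈ Λ.ZC (Λ.comp P b)) :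
    (Λ.minPairs a b).Nonempty := by
  obtain ⟨ρ, τ, ⟨hρ, hτ, hcomp, -⟩, -⟩ := exists_mem_minPairs_of_mem_ZC ha hb
  rw [Λ.src_comp _ _ hPa] at hρ
  rw [Λ.src_comp _ _ hPb] at hτ
  rw [Λ.comp_assoc _ _ _ hPa hρ, Λ.comp_assoc _ _ _ hPb hτ] at hcomp
  exact minPairs_nonempty_of_comp_eq hρ hτ
    (eq_of_comp_eq_comp (by rwa [Λ.rng_comp _ _ hρ]) (by rwa [Λ.rng_comp _ _ hτ]) rfl hcomp).2

end Cylinder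

/-- Otherwise `Ext(P; F)` is exhaustive at `s(P)`, and `w` passes at `d(P)` through some `ρ` in
it, so that `w ∈ Z(Pρ) ⊆ Z(μ)` for some `μ ∈ F`. -/
theorem exists_ZC_comp_subset (hΛ : Λ.FinitelyAligned) {P : Λ.Path} {F : Set Λ.Path}
    (hF : F.Finite) {w : Λ.BoundaryPath} (hwP : w ∈ Λ.ZC P) (hwF : ∀ μ ∈ F, w ∉ Λ.ZC μ) :
    ∃ τ, Λ.src P = Λ.rng τ ∧ ∀ z ∈ Λ.ZC (Λ.comp P τ), ∀ μ ∈ F, z ∉ Λ.ZC μ := by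
  have hFP : ∀ μ ∈ F, ¬Λ.IsPrefix μ P := fun μ hμ h => hwF μ hμ (mem_ZC_of_isPrefix hwP h)
  have hnex : ¬Λ.Exhaustive (Λ.src P) (Λ.extSet P F) := by
    intro hex
    have hFE : Λ.FE (w.vtx (Λ.deg P)) (Λ.extSet P F) := src_eq_vtx_of_mem_ZC hwP ▸
      ⟨extSet_finite hΛ P hF, fun _ hρ => rng_eq_and_ne_vertex_of_mem_extSet hFP hρ, hex⟩
    obtain ⟨ρ, hρ, hρle, hρseg⟩ := w.boundary _ (mem_ZC_iff.mp hwP).1 _ hFE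
    simp only [extSet, Set.mem_iUnion] at hρ
    obtain ⟨μ, hμ, τ, -, hμτ, hcomp, -⟩ := hρ
    exact hwF μ hμ (mem_ZC_of_isPrefix (mem_ZC_comp hwP hρle hρseg) (hcomp ▸ isPrefix_comp hμτ))
  simp only [Exhaustive, not_forall, not_exists, not_and, Set.not_nonempty_iff_eq_empty] at hnex
  obtain ⟨τ, hτ, hτF⟩ := hnex
  refine ⟨τ, hτ.symm, fun z hz μ hμ hzμ => ?_⟩
  obtain ⟨ρ, t, hmin, hzρ⟩ :=
    exists_mem_minPairs_of_mem_ZC (mem_ZC_of_isPrefix hz (isPrefix_comp hτ.symm)) hzμ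
  have hne := minPairs_nonempty_of_mem_ZC_comp hτ.symm hmin.1 hz hzρ
  rw [hτF ρ (Set.mem_biUnion hμ ⟨t, hmin⟩)] at hne
  exact Set.not_nonempty_empty hne

theorem unitOf_eq {a : Λ.bpSpace} (ha : a ∈ Λ.unitSet) : Λ.unitOf a.1.1 = a :=
  Subtype.ext (Prod.ext rfl (Prod.ext ha.1.symm ha.2))

theorem unitOf_mem_unitSet (x : Λ.BoundaryPath) : Λ.unitOf x ∈ Λ.unitSet := ⟨rfl, rfl⟩

theorem unitOf_mem_ZP_iff {p q : Λ.Path} {z : Λ.BoundaryPath} :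
    (Λ.unitOf z).1 ∈ Λ.ZP p q ↔ p = q ∧ z ∈ Λ.ZC p := by
  constructor
  · rintro ⟨h₀, hp, hq, -⟩
    have hdeg : Λ.deg p = Λ.deg q := funext fun i => by
      have := congrFun h₀ i
      simp only [unitOf, Pi.zero_apply] at this
      omega
    exact ⟨by rw [← (mem_ZC_iff.mp hp).2, ← (mem_ZC_iff.mp hq).2, hdeg]; rfl, hp⟩
  · rintro ⟨rfl, z', hz'⟩
    exact ⟨by funext i; simp [unitOf], ⟨z', hz'⟩, ⟨z', hz'⟩, z', hz'.1, hz'.1⟩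

theorem unitOf_mem_ZPD_self_iff {p : Λ.Path} {G : Set Λ.Path} {z : Λ.BoundaryPath} :
    (Λ.unitOf z).1 ∈ Λ.ZPD p p G ↔ z ∈ Λ.ZC p ∧ ∀ ν ∈ G, z ∉ Λ.ZC (Λ.comp p ν) := by
  simp only [ZPD, Set.mem_sdiff, Set.mem_iUnion, unitOf_mem_ZP_iff, true_and, not_exists]

theorem exists_ZC_sdiff_subset_of_isOpen {W : Set Λ.bpSpace} (hW : @IsOpen _ Λ.bpTop W)
    {w : Λ.BoundaryPath} (hw : Λ.unitOf w ∈ W) :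
    ∃ P, ∃ F : Set Λ.Path, F.Finite ∧ w ∈ Λ.ZC P ∧ (∀ μ ∈ F, w ∉ Λ.ZC μ) ∧
      ∀ z ∈ Λ.ZC P, (∀ μ ∈ F, z ∉ Λ.ZC μ) → Λ.unitOf z ∈ W := by
  change TopologicalSpace.GenerateOpen _ W at hW
  induction hW generalizing w with
  | basic U hU =>
    obtain ⟨p, q, G, -, -, hG, rfl⟩ := hU
    obtain rfl := (unitOf_mem_ZP_iff.mp hw.1).1
    obtain ⟨hwp, hwG⟩ := unitOf_mem_ZPD_self_iff.mp hw
    exact ⟨p, Λ.comp p '' G, hG.image _, hwp, Set.forall_mem_image.mpr hwG,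
      fun z hz hzG => unitOf_mem_ZPD_self_iff.mpr ⟨hz, fun ν hν => hzG _ ⟨ν, hν, rfl⟩⟩⟩
  | univ =>
    exact ⟨w.seg 0 0, ∅, Set.finite_empty, mem_ZC_seg (leDeg_zero _), by simp,
      fun _ _ _ => trivial⟩
  | inter U₁ U₂ _ _ ih₁ ih₂ =>
    obtain ⟨P₁, F₁, hF₁, hwP₁, hwF₁, h₁⟩ := ih₁ hw.1
    obtain ⟨P₂, F₂, hF₂, hwP₂, hwF₂, h₂⟩ := ih₂ hw.2
    have hM := (mem_ZC_iff.mp hwP₁).1.sup (mem_ZC_iff.mp hwP₂).1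
    refine ⟨w.seg 0 (Λ.deg P₁ ⊔ Λ.deg P₂), F₁ ∪ F₂, hF₁.union hF₂, mem_ZC_seg hM,
      fun μ hμ => hμ.elim (hwF₁ μ) (hwF₂ μ), fun z hz hzF => ⟨?_, ?_⟩⟩
    · exact h₁ z (mem_ZC_of_isPrefix hz (isPrefix_seg_of_mem_ZC hwP₁ le_sup_left hM))
        fun μ hμ => hzF μ (Or.inl hμ)
    · exact h₂ z (mem_ZC_of_isPrefix hz (isPrefix_seg_of_mem_ZC hwP₂ le_sup_right hM))
        fun μ hμ => hzF μ (Or.inr hμ)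
  | sUnion S _ ih =>
    obtain ⟨U, hUS, hwU⟩ := hw
    obtain ⟨P, F, hF, hwP, hwF, h⟩ := ih U hUS hwU
    exact ⟨P, F, hF, hwP, hwF, fun z hz hzF => ⟨U, hUS, h z hz hzF⟩⟩

theorem exists_ZC_subset_of_isOpen (hΛ : Λ.FinitelyAligned) {W : Set Λ.bpSpace}
    (hW : @IsOpen _ Λ.bpTop W) {w : Λ.BoundaryPath} (hw : Λ.unitOf w ∈ W) :
    ∃ ξ, ∀ z ∈ Λ.ZC ξ, Λ.unitOf z ∈ W := by
  obtain ⟨P, F, hF, hwP, hwF, hPF⟩ := exists_ZC_sdiff_subset_of_isOpen hW hw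
  obtain ⟨τ, hτ, hτF⟩ := exists_ZC_comp_subset hΛ hF hwP hwF
  exact ⟨Λ.comp P τ, fun z hz => hPF z (mem_ZC_of_isPrefix hz (isPrefix_comp hτ)) (hτF z hz)⟩

def Reaches (v : Λ.Obj) (x : Λ.BoundaryPath) : Prop :=
  ∃ n, LeDeg n x.deg ∧ ∃ p, Λ.rng p = v ∧ Λ.src p = x.vtx n

theorem reaches_iff_exists_mem_ZC {v : Λ.Obj} {x : Λ.BoundaryPath} :
    Λ.Reaches v x ↔ ∃ P, x ∈ Λ.ZC P ∧ ∃ p, Λ.rng p = v ∧ Λ.src p = Λ.src P := by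
  constructor
  · rintro ⟨n, hn, p, hpv, hpx⟩
    refine ⟨x.seg 0 n, mem_ZC_seg hn, p, hpv, ?_⟩
    rw [hpx, BoundaryPath.src_seg_eq_vtx zero_le hn]
  · rintro ⟨P, hxP, p, hpv, hpP⟩
    exact ⟨Λ.deg P, (mem_ZC_iff.mp hxP).1, p, hpv, hpP.trans (src_eq_vtx_of_mem_ZC hxP)⟩

section IsShift

variable {n m : Fin k → ℕ} {x y : Λ.BoundaryPath}

theorem IsShift.vtx_eq (h : Λ.IsShift n x y) (hm : LeDeg m y.deg) : y.vtx m = x.vtx (n + m) := by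
  rw [BoundaryPath.vtx, h.2.2 m m le_rfl hm]
  rfl

theorem IsShift.leDeg_iff (h : Λ.IsShift n x y) : LeDeg m y.deg ↔ LeDeg (n + m) x.deg := by
  rw [← leDeg_sub_iff h.1, funext h.2.1]

theorem IsShift.reaches_iff {v : Λ.Obj} (h : Λ.IsShift n x y) :
    Λ.Reaches v y ↔ Λ.Reaches v x := by
  constructor
  · rintro ⟨m, hm, p, hpv, hpy⟩
    exact ⟨n + m, h.leDeg_iff.mp hm, p, hpv, hpy.trans (h.vtx_eq hm)⟩
  · rintro ⟨m, hm, p, hpv, hpx⟩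
    have hM := hm.sup h.1
    have hnM : n + (m ⊔ n - n) = m ⊔ n := add_tsub_cancel_of_le le_sup_right
    have hM' : LeDeg (m ⊔ n - n) y.deg := h.leDeg_iff.mpr (by rwa [hnM])
    have hpseg : Λ.src p = Λ.rng (x.seg m (m ⊔ n)) := by
      rw [BoundaryPath.rng_seg le_sup_left hM, hpx]
    refine ⟨m ⊔ n - n, hM', Λ.comp p (x.seg m (m ⊔ n)), by rw [Λ.rng_comp _ _ hpseg, hpv], ?_⟩
    rw [Λ.src_comp _ _ hpseg, h.vtx_eq hM', hnM, BoundaryPath.src_seg_eq_vtx le_sup_left hM]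

end IsShift

theorem rng_shift {x : Λ.BoundaryPath} {n : Fin k → ℕ} (hn : LeDeg n x.deg) :
    (x.shift n hn).rng = x.vtx n := by
  rw [BoundaryPath.rng, (x.isShift_shift n hn).vtx_eq (leDeg_zero _), add_zero]

theorem reaches_of_mem_BPG {v : Λ.Obj} {a : Λ.BoundaryPath × (Fin k → ℤ) × Λ.BoundaryPath}
    (ha : a ∈ Λ.BPG) (h : Λ.Reaches v a.2.2) : Λ.Reaches v a.1 := by
  obtain ⟨p, q, z, -, hp, hq⟩ := ha
  exact hp.reaches_iff.mp (hq.reaches_iff.mpr h)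

theorem exists_isOpen_reaches_eq (v : Λ.Obj) :
    ∃ W, @IsOpen _ Λ.bpTop W ∧
      {a : Λ.bpSpace | a ∈ Λ.unitSet ∧ Λ.Reaches v a.1.1} = W ∩ Λ.unitSet := by
  refine ⟨⋃ P ∈ {P | ∃ p, Λ.rng p = v ∧ Λ.src p = Λ.src P}, Subtype.val ⁻¹' Λ.ZPD P P ∅,
    @isOpen_biUnion _ _ Λ.bpTop _ _ fun P _ =>
      TopologicalSpace.GenerateOpen.basic _ ⟨P, P, ∅, rfl, by simp, Set.finite_empty, rfl⟩, ?_⟩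
  ext a
  constructor
  · rintro ⟨ha, hr⟩
    obtain ⟨P, haP, hP⟩ := reaches_iff_exists_mem_ZC.mp hr
    refine ⟨Set.mem_biUnion hP ?_, ha⟩
    rw [Set.mem_preimage, ← unitOf_eq ha]
    exact unitOf_mem_ZPD_self_iff.mpr ⟨haP, by simp⟩
  · rintro ⟨hW, ha⟩
    simp only [Set.mem_iUnion] at hW
    obtain ⟨P, hP, haP⟩ := hW
    rw [Set.mem_preimage, ← unitOf_eq ha] at haP
    exact ⟨ha, reaches_iff_exists_mem_ZC.mpr ⟨P, (unitOf_mem_ZPD_self_iff.mp haP).1, hP⟩⟩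

/-- The witness is `ξ p σⁿ y`, with `p ∈ s(ξ)Λy(n)` given by cofinality. -/
theorem exists_mem_BPG_mem_ZC (hΛ : Λ.FinitelyAligned) (hc : Λ.Cofinal) (ξ : Λ.Path)
    (y : Λ.BoundaryPath) : ∃ a : Λ.bpSpace, a.1.1 = y ∧ a.1.2.2 ∈ Λ.ZC ξ := by
  obtain ⟨n, hn, p, hpξ, hpy⟩ := hc (Λ.src ξ) y
  have hξp : Λ.src (Λ.comp ξ p) = (y.shift n hn).rng := by
    rw [Λ.src_comp _ _ hpξ.symm, hpy]
    exact (rng_shift hn).symm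
  have hz := BoundaryPath.isConcat_concat hΛ hξp
  refine ⟨⟨(y, _, BoundaryPath.concat hΛ _ _ hξp), n, Λ.deg (Λ.comp ξ p), _, rfl,
    y.isShift_shift n hn, hz.1⟩, rfl, ?_⟩
  exact mem_ZC_of_isPrefix ⟨_, hz⟩ (isPrefix_comp hpξ.symm)

def IsMinimal (Λ : KGraph k) : Prop :=
  ∀ V : Set Λ.bpSpace, V ⊆ Λ.unitSet →
    (∃ W, @IsOpen _ Λ.bpTop W ∧ V = W ∩ Λ.unitSet) →
    (∀ a : Λ.bpSpace, Λ.unitOf a.1.2.2 ∈ V → Λ.unitOf a.1.1 ∈ V) →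
    V = ∅ ∨ V = Λ.unitSet

theorem isMinimal_of_cofinal (hΛ : Λ.FinitelyAligned) (hc : Λ.Cofinal) : Λ.IsMinimal := by
  rintro V hV ⟨W, hW, rfl⟩ hinv
  refine (W ∩ Λ.unitSet).eq_empty_or_nonempty.imp id fun ⟨a₀, ha₀W, ha₀⟩ => ?_
  rw [← unitOf_eq ha₀] at ha₀W
  obtain ⟨ξ, hξ⟩ := exists_ZC_subset_of_isOpen hΛ hW ha₀W
  refine hV.antisymm fun b hb => ?_
  obtain ⟨a, hab, ha⟩ := exists_mem_BPG_mem_ZC hΛ hc ξ b.1.1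
  rw [← unitOf_eq hb, ← hab]
  exact hinv a ⟨hξ _ ha, unitOf_mem_unitSet _⟩

theorem cofinal_of_isMinimal (h : Λ.IsMinimal) : Λ.Cofinal := by
  intro v x
  set V := {a : Λ.bpSpace | a ∈ Λ.unitSet ∧ Λ.Reaches v a.1.1}
  have hinv : ∀ a : Λ.bpSpace, Λ.unitOf a.1.2.2 ∈ V → Λ.unitOf a.1.1 ∈ V :=
    fun a ha => ⟨unitOf_mem_unitSet _, reaches_of_mem_BPG (a := a.1) a.2 ha.2⟩
  rcases h V (fun _ ha => ha.1) (exists_isOpen_reaches_eq v) hinv with hV | hV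
  · obtain ⟨y, rfl⟩ := exists_boundaryPath v
    have hy : Λ.unitOf y ∈ V :=
      ⟨unitOf_mem_unitSet y, 0, leDeg_zero _, Λ.vertex y.rng, Λ.rng_vertex _, Λ.src_vertex _⟩
    rw [hV] at hy
    exact hy.elim
  · have hx : Λ.unitOf x ∈ V := hV ▸ unitOf_mem_unitSet x
    exact hx.2

end KGraph

theorem cofinal_iff_minimal_general {k : ℕ} (Λ : KGraph k)
    (hΛ : Λ.FinitelyAligned) :
    Λ.Cofinal ↔
      ∀ V : Set Λ.bpSpace, V ⊆ Λ.unitSet →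
        (∃ W, @IsOpen _ Λ.bpTop W ∧ V = W ∩ Λ.unitSet) →
        (∀ a : Λ.bpSpace, Λ.unitOf a.1.2.2 ∈ V → Λ.unitOf a.1.1 ∈ V) →
        V = ∅ ∨ V = Λ.unitSet :=
  ⟨KGraph.isMinimal_of_cofinal hΛ, KGraph.cofinal_of_isMinimal⟩

/-- `Λ` is cofinal iff the boundary-path groupoid `G_Λ` is minimal,
i.e. the unit space has no nontrivial relatively open invariant subsets. -/
theorem cofinal_iff_minimal {k : ℕ} (hk : 0 < k) (Λ : KGraph k)
    (hΛ : Λ.FinitelyAligned) :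
    Λ.Cofinal ↔
      ∀ V : Set Λ.bpSpace, V ⊆ Λ.unitSet →
        (∃ W, @IsOpen _ Λ.bpTop W ∧ V = W ∩ Λ.unitSet) →
        (∀ a : Λ.bpSpace, Λ.unitOf a.1.2.2 ∈ V → Λ.unitOf a.1.1 ∈ V) →
        V = ∅ ∨ V = Λ.unitSet :=
  cofinal_iff_minimal_general Λ hΛ
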